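/- Let D₁ and D₂ be finite abelian groups equipped with quadratic forms q₁ : D₁ → ℚ/ℤ and q₂ : D₂ → ℚ/ℤ, of coprime orders, and let D = D₁ × D₂ with q(x,y) = q₁(x) + q₂(y). Suppose the levels N₁ of (D₁,q₁) and N₂ of (D₂,q₂) are coprime, and set N = N₁N₂. Then for any integer n, q represents n/N (mod ℤ) if and only if q₁ represents N₂·n/N₁ (mod ℤ) and q₂ represents N₁·n/N₂ (mod ℤ). -/

import Mathlib

/-!
Both directions are computations in `ℚ/ℤ` using `q(mγ) = m² q(γ)`.
If `q₁ x + q₂ y = n/(N₁N₂)`, multiplying `x` by `N₂` kills the `q₂`-part, since `N₂` annihilates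
`q₂`, and gives `q₁(N₂x) = N₂² n/(N₁N₂) = N₂n/N₁`; symmetrically for `q₂(N₁y)`.
Conversely, from Bézout `uN₁ + vN₂ = 1` and `q₁ γ₁ = N₂n/N₁`, `q₂ γ₂ = N₁n/N₂`, the element
`(vγ₁, uγ₂)` has value `(v²N₂² + u²N₁²) n/(N₁N₂) = (1 - 2uvN₁N₂) n/(N₁N₂) ≡ n/(N₁N₂)`.
-/

lemma map_zsmul_of_add_eq {D A : Type*} [AddCommGroup D] [AddCommGroup A] {q : D → A}
    (hq : ∀ (m : ℤ) (γ : D), q (m • γ) = m ^ 2 • q γ) {N : ℤ} {x : D} {t c : A}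
    (ht : N • t = 0) (h : q x + t = c) : q (N • x) = (N * N) • c := by
  rw [hq, sq, ← h, smul_add, mul_smul N N t, ht, smul_zero, add_zero]

lemma AddCircle.coe_add_zsmul_period {𝕜 : Type*} [AddCommGroup 𝕜] [LinearOrder 𝕜]
    [IsOrderedAddMonoid 𝕜] (p x : 𝕜) (k : ℤ) : ((x + k • p : 𝕜) : AddCircle p) = x := by
  rw [AddCircle.coe_add, AddCircle.coe_zsmul, AddCircle.coe_period, smul_zero, add_zero]

lemma mul_self_zsmul_coe_div_mul (n M : ℤ) {N : ℤ} (hN : N ≠ 0) :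
    (N * N) • ((n / (M * N) : ℚ) : AddCircle (1 : ℚ)) = ((N * n / M : ℚ) : AddCircle (1 : ℚ)) := by
  rw [← AddCircle.coe_zsmul, zsmul_eq_mul]
  congr 1
  push_cast
  field_simp

lemma sq_zsmul_add_sq_zsmul_eq_coe_div_mul {N₁ N₂ u v : ℤ} (n : ℤ) (hN₁ : N₁ ≠ 0)
    (hN₂ : N₂ ≠ 0) (huv : u * N₁ + v * N₂ = 1) :
    v ^ 2 • ((N₂ * n / N₁ : ℚ) : AddCircle (1 : ℚ)) + u ^ 2 • ((N₁ * n / N₂ : ℚ) : AddCircle (1 : ℚ))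
      = ((n / (N₁ * N₂) : ℚ) : AddCircle (1 : ℚ)) := by
  have hsq : ((v : ℚ) * N₂) ^ 2 + ((u : ℚ) * N₁) ^ 2 = 1 - 2 * u * v * N₁ * N₂ := by
    have huvQ : (u : ℚ) * N₁ + v * N₂ = 1 := by exact_mod_cast huv
    linear_combination (u * N₁ + v * N₂ + 1) * huvQ
  calc v ^ 2 • ((N₂ * n / N₁ : ℚ) : AddCircle (1 : ℚ)) + u ^ 2 • ((N₁ * n / N₂ : ℚ) : AddCircle (1 : ℚ))
      = ((v ^ 2 • (N₂ * n / N₁ : ℚ) + u ^ 2 • (N₁ * n / N₂ : ℚ) : ℚ) : AddCircle (1 : ℚ)) := by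
        rw [AddCircle.coe_add, AddCircle.coe_zsmul, AddCircle.coe_zsmul]
    _ = ((n / (N₁ * N₂) + (-2 * u * v * n) • 1 : ℚ) : AddCircle (1 : ℚ)) := by
        congr 1
        simp only [zsmul_eq_mul]
        push_cast
        field_simp
        linear_combination n * hsq
    _ = ((n / (N₁ * N₂) : ℚ) : AddCircle (1 : ℚ)) := AddCircle.coe_add_zsmul_period _ _ _

theorem stmt_5_general (D₁ D₂ : Type) [AddCommGroup D₁] [AddCommGroup D₂]
    (q₁ : D₁ → AddCircle (1 : ℚ)) (q₂ : D₂ → AddCircle (1 : ℚ))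
    (hq₁ : ∀ (m : ℤ) (γ : D₁), q₁ (m • γ) = (m ^ 2) • q₁ γ)
    (hq₂ : ∀ (m : ℤ) (γ : D₂), q₂ (m • γ) = (m ^ 2) • q₂ γ)
    (N₁ N₂ : ℕ)
    (hN₁ : IsLeast {k : ℕ | 0 < k ∧ ∀ γ : D₁, (k : ℤ) • q₁ γ = 0} N₁)
    (hN₂ : IsLeast {k : ℕ | 0 < k ∧ ∀ γ : D₂, (k : ℤ) • q₂ γ = 0} N₂)
    (hcop : Nat.Coprime N₁ N₂)
    (n : ℤ) :
    (∃ γ : D₁ × D₂, q₁ γ.1 + q₂ γ.2 = ((n : ℚ) / (N₁ * N₂ : ℕ) : ℚ)) ↔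
      ((∃ γ₁ : D₁, q₁ γ₁ = (((N₂ : ℚ) * n) / (N₁ : ℕ) : ℚ)) ∧
        (∃ γ₂ : D₂, q₂ γ₂ = (((N₁ : ℚ) * n) / (N₂ : ℕ) : ℚ))) := by
  obtain ⟨⟨hN₁pos, hN₁ann⟩, -⟩ := hN₁
  obtain ⟨⟨hN₂pos, hN₂ann⟩, -⟩ := hN₂
  have hN₁0 : (N₁ : ℤ) ≠ 0 := by exact_mod_cast hN₁pos.ne'
  have hN₂0 : (N₂ : ℤ) ≠ 0 := by exact_mod_cast hN₂pos.ne'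
  constructor
  · rintro ⟨⟨x, y⟩, hxy⟩
    refine ⟨⟨(N₂ : ℤ) • x, ?_⟩, ⟨(N₁ : ℤ) • y, ?_⟩⟩
    · rw [map_zsmul_of_add_eq hq₁ (hN₂ann y) hxy]
      have h := mul_self_zsmul_coe_div_mul n N₁ hN₂0
      push_cast at h ⊢
      exact h
    · rw [map_zsmul_of_add_eq hq₂ (hN₁ann x) ((add_comm _ _).trans hxy)]
      have h := mul_self_zsmul_coe_div_mul n N₂ hN₁0
      push_cast at h ⊢
      rwa [mul_comm (N₁ : ℚ)]
  · rintro ⟨⟨γ₁, h₁⟩, ⟨γ₂, h₂⟩⟩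
    obtain ⟨u, v, huv⟩ := Nat.isCoprime_iff_coprime.2 hcop
    refine ⟨(v • γ₁, u • γ₂), ?_⟩
    have h := sq_zsmul_add_sq_zsmul_eq_coe_div_mul n hN₁0 hN₂0 huv
    push_cast at h ⊢
    rw [hq₁, hq₂, h₁, h₂, h]

/-- For finite quadratic modules `(D₁,q₁)`, `(D₂,q₂)` of coprime orders and coprime
levels `N₁, N₂`, with `N = N₁N₂`, the orthogonal direct sum `q(x,y) = q₁ x + q₂ y`
represents `n/N (mod ℤ)` if and only if `q₁` represents `N₂·n/N₁ (mod ℤ)` and `q₂`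
represents `N₁·n/N₂ (mod ℤ)`. -/
theorem stmt_5 (D₁ D₂ : Type) [AddCommGroup D₁] [AddCommGroup D₂] [Fintype D₁] [Fintype D₂]
    (q₁ : D₁ → AddCircle (1 : ℚ)) (q₂ : D₂ → AddCircle (1 : ℚ))
    (hq₁ : ∀ (m : ℤ) (γ : D₁), q₁ (m • γ) = (m ^ 2) • q₁ γ)
    (hq₂ : ∀ (m : ℤ) (γ : D₂), q₂ (m • γ) = (m ^ 2) • q₂ γ)
    (hcardcop : Nat.Coprime (Fintype.card D₁) (Fintype.card D₂))
    (N₁ N₂ : ℕ)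
    (hN₁ : IsLeast {k : ℕ | 0 < k ∧ ∀ γ : D₁, (k : ℤ) • q₁ γ = 0} N₁)
    (hN₂ : IsLeast {k : ℕ | 0 < k ∧ ∀ γ : D₂, (k : ℤ) • q₂ γ = 0} N₂)
    (hcop : Nat.Coprime N₁ N₂)
    (n : ℤ) :
    (∃ γ : D₁ × D₂, q₁ γ.1 + q₂ γ.2 = ((n : ℚ) / (N₁ * N₂ : ℕ) : ℚ)) ↔
      ((∃ γ₁ : D₁, q₁ γ₁ = (((N₂ : ℚ) * n) / (N₁ : ℕ) : ℚ)) ∧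
        (∃ γ₂ : D₂, q₂ γ₂ = (((N₁ : ℚ) * n) / (N₂ : ℕ) : ℚ))) :=
  stmt_5_general D₁ D₂ q₁ q₂ hq₁ hq₂ N₁ N₂ hN₁ hN₂ hcop n
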